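/- Let r ∈ [0,1], 0 < b < 1, 0 < e < 1, and p, q ≥ 0 with 0 < p + q ≤ 1. Then there exists δ* > 0 such that for every δ > δ*, the map F_{r,p,q,b,e,δ} is a contraction on the unit square: there exists L ∈ [0,1) with ‖F(θ) − F(θ′)‖ ≤ L·‖θ − θ′‖ for all θ, θ′ ∈ [0,1]², where ‖·‖ is the Euclidean norm on ℝ². -/
import Mathlib


noncomputable def sVal (p q δ : ℝ) : ℝ := (p + q) * δ

noncomputable def aR (r p q δ t : ℝ) : ℝ := t + r * sVal p q δ

noncomputable def aB (r p q δ t : ℝ) : ℝ := 1 - t + (1 - r) * sVal p q δ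

noncomputable def P1RR (r p q b e δ x : ℝ) : ℝ :=
  e * aR r p q δ x / (1 + sVal p q δ - b * aB r p q δ x - (1 - e) * aR r p q δ x)

noncomputable def P1RB (r p q b e δ x : ℝ) : ℝ :=
  (1 - b) * aB r p q δ x / (1 + sVal p q δ - b * aB r p q δ x - (1 - e) * aR r p q δ x)

noncomputable def P1BR (r p q b e δ x : ℝ) : ℝ :=
  (1 - e) * aR r p q δ x / (1 + sVal p q δ - e * aR r p q δ x - (1 - b) * aB r p q δ x)

noncomputable def P1BB (r p q b e δ x : ℝ) : ℝ :=
  b * aB r p q δ x / (1 + sVal p q δ - e * aR r p q δ x - (1 - b) * aB r p q δ x)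

noncomputable def P2RR (r p q b e δ y : ℝ) : ℝ :=
  e * aR r p q δ y / (1 + sVal p q δ - e * aB r p q δ y - (1 - e) * aR r p q δ y)

noncomputable def P2RB (r p q b e δ y : ℝ) : ℝ :=
  (1 - e) * aB r p q δ y / (1 + sVal p q δ - e * aB r p q δ y - (1 - e) * aR r p q δ y)

noncomputable def P2BR (r p q b e δ y : ℝ) : ℝ :=
  (1 - b) * aR r p q δ y / (1 + sVal p q δ - b * aR r p q δ y - (1 - b) * aB r p q δ y)

noncomputable def P2BB (r p q b e δ y : ℝ) : ℝ :=
  b * aB r p q δ y / (1 + sVal p q δ - b * aR r p q δ y - (1 - b) * aB r p q δ y)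

noncomputable def D3 (r p q b e δ x y : ℝ) : ℝ :=
  (1 + sVal p q δ) ^ 2 - b * aR r p q δ y * aB r p q δ x - e * aR r p q δ x * aB r p q δ y
    - (1 - b) * aB r p q δ x * aB r p q δ y - (1 - e) * aR r p q δ x * aR r p q δ y

noncomputable def P3RR (r p q b e δ x y : ℝ) : ℝ :=
  e * aR r p q δ y * aR r p q δ x / D3 r p q b e δ x y

noncomputable def P3BR (r p q b e δ x y : ℝ) : ℝ :=
  (1 - e) * aB r p q δ y * aR r p q δ x / D3 r p q b e δ x y

noncomputable def P3RB (r p q b e δ x y : ℝ) : ℝ :=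
  (1 - b) * aR r p q δ y * aB r p q δ x / D3 r p q b e δ x y

noncomputable def P3BB (r p q b e δ x y : ℝ) : ℝ :=
  b * aB r p q δ y * aB r p q δ x / D3 r p q b e δ x y

noncomputable def F (r p q b e δ : ℝ) (θ : ℝ × ℝ) : ℝ × ℝ :=
  (p * (r * P1RR r p q b e δ θ.1 + (1 - r) * P1BR r p q b e δ θ.1) + q * r
      + (1 - p - q) * (P3RR r p q b e δ θ.1 θ.2 + P3BR r p q b e δ θ.1 θ.2),
   p * r + q * (r * P2RR r p q b e δ θ.2 + (1 - r) * P2BR r p q b e δ θ.2)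
      + (1 - p - q) * (P3RR r p q b e δ θ.1 θ.2 + P3RB r p q b e δ θ.1 θ.2))

noncomputable def Ci (r p q b e δ x y : ℝ) : ℝ :=
  p * r * e / (1 + sVal p q δ - b * aB r p q δ x - (1 - e) * aR r p q δ x)
    + p * (1 - r) * (1 - e) / (1 + sVal p q δ - e * aR r p q δ x - (1 - b) * aB r p q δ x)
    + (1 - p - q) * (e * aR r p q δ y + (1 - e) * aB r p q δ y) / D3 r p q b e δ x y

noncomputable def Co (r p q b e δ x y : ℝ) : ℝ :=
  q * r * e / (1 + sVal p q δ - e * aB r p q δ y - (1 - e) * aR r p q δ y)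
    + q * (1 - r) * (1 - b) / (1 + sVal p q δ - b * aR r p q δ y - (1 - b) * aB r p q δ y)
    + (1 - p - q) * (e * aR r p q δ x + (1 - b) * aB r p q δ x) / D3 r p q b e δ x y

noncomputable def CiB (r p q b e δ x y : ℝ) : ℝ := Ci (1 - r) p q e b δ (1 - x) (1 - y)

noncomputable def CoB (r p q b e δ x y : ℝ) : ℝ := Co (1 - r) p q e b δ (1 - x) (1 - y)

private lemma ratio_diff (a a' d d' m A NA B : ℝ) (hm : 0 < m) (hd : m ≤ d) (hd' : m ≤ d')
    (hA : |a - a'| ≤ A) (hNA : |a'| ≤ NA) (hB : |d - d'| ≤ B) :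
    |a / d - a' / d'| ≤ A / m + NA * B / m ^ 2 := by
  have hd0 : 0 < d := hm.trans_le hd
  have hd0' : 0 < d' := hm.trans_le hd'
  have hA0 : 0 ≤ A := (abs_nonneg _).trans hA
  have hNA0 : 0 ≤ NA := (abs_nonneg _).trans hNA
  have hB0 : 0 ≤ B := (abs_nonneg _).trans hB
  have key : a / d - a' / d' = ((a - a') * d' + a' * (d' - d)) / (d * d') := by
    field_simp
    ring
  rw [key, abs_div, abs_of_pos (mul_pos hd0 hd0')]
  have hm2 : m ^ 2 ≤ d * d' := by nlinarith
  have h1 : |(a - a') * d' + a' * (d' - d)| ≤ A * d' + NA * B := by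
    calc |(a - a') * d' + a' * (d' - d)| ≤ |(a - a') * d'| + |a' * (d' - d)| := abs_add_le _ _
      _ = |a - a'| * d' + |a'| * |d' - d| := by rw [abs_mul, abs_mul, abs_of_pos hd0']
      _ ≤ A * d' + NA * B := by
          have hB' : |d' - d| ≤ B := by rw [abs_sub_comm]; exact hB
          gcongr
  calc |(a - a') * d' + a' * (d' - d)| / (d * d') ≤ (A * d' + NA * B) / (d * d') := by gcongr
    _ = A / d + NA * B / (d * d') := by field_simp
    _ ≤ A / m + NA * B / m ^ 2 := by gcongr

private lemma prod_diff (U U' V V' M du dv : ℝ) (hU : |U| ≤ M) (hV' : |V'| ≤ M)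
    (hdu : |U - U'| ≤ du) (hdv : |V - V'| ≤ dv) :
    |U * V - U' * V'| ≤ M * (du + dv) := by
  have hM0 : 0 ≤ M := (abs_nonneg _).trans hU
  have h : U * V - U' * V' = U * (V - V') + V' * (U - U') := by ring
  rw [h]
  calc |U * (V - V') + V' * (U - U')| ≤ |U| * |V - V'| + |V'| * |U - U'| := by
        rw [← abs_mul, ← abs_mul]; exact abs_add_le _ _
    _ ≤ M * (du + dv) := by
        nlinarith [abs_nonneg U, abs_nonneg V', abs_nonneg (V - V'), abs_nonneg (U - U'),
          mul_le_mul hU hdv (abs_nonneg _) hM0, mul_le_mul hV' hdu (abs_nonneg _) hM0]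

private lemma quad_lb (c e b X X' Y Y' S : ℝ) (hce : c ≤ e) (hce' : c ≤ 1 - e)
    (hcb : c ≤ b) (hcb' : c ≤ 1 - b) (hX0 : 0 ≤ X) (hX0' : 0 ≤ X')
    (hY0 : 0 ≤ Y) (hY0' : 0 ≤ Y') (hsx : X + X' = S) (hsy : Y + Y' = S) :
    c * S ^ 2 ≤ e * X * Y + (1 - e) * X * Y' + (1 - b) * X' * Y + b * X' * Y' := by
  have h2 : c * S ^ 2 = c * (X * Y) + c * (X * Y') + c * (X' * Y) + c * (X' * Y') := by
    linear_combination (-(c * (Y + Y'))) * hsx + (-(c * S)) * hsy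
  nlinarith [h2, mul_nonneg (mul_nonneg (sub_nonneg.2 hce) hX0) hY0,
    mul_nonneg (mul_nonneg (sub_nonneg.2 hce') hX0) hY0',
    mul_nonneg (mul_nonneg (sub_nonneg.2 hcb') hX0') hY0,
    mul_nonneg (mul_nonneg (sub_nonneg.2 hcb) hX0') hY0']

private lemma scale_bound (α Δ K D1 D2 : ℝ) (h0 : 0 ≤ α) (h1 : α ≤ 1)
    (hΔ : |Δ| ≤ K * D1) (hD : D1 ≤ D2) (hK : 0 ≤ K) : |α * Δ| ≤ K * D2 := by
  rw [abs_mul, abs_of_nonneg h0]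
  nlinarith [abs_nonneg Δ, mul_le_mul_of_nonneg_right h1 (abs_nonneg Δ)]
section Helpers

private lemma aR_nonneg (r p q δ t : ℝ) (hr0 : 0 ≤ r) (ht0 : 0 ≤ t)
    (hs0 : 0 ≤ sVal p q δ) : 0 ≤ aR r p q δ t := by
  unfold aR; nlinarith

private lemma aR_le (r p q δ t : ℝ) (hr1 : r ≤ 1) (ht1 : t ≤ 1)
    (hs0 : 0 ≤ sVal p q δ) : aR r p q δ t ≤ 1 + sVal p q δ := by
  unfold aR; nlinarith

private lemma aB_nonneg (r p q δ t : ℝ) (hr1 : r ≤ 1) (ht1 : t ≤ 1)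
    (hs0 : 0 ≤ sVal p q δ) : 0 ≤ aB r p q δ t := by
  unfold aB; nlinarith

private lemma aB_le (r p q δ t : ℝ) (hr0 : 0 ≤ r) (ht0 : 0 ≤ t)
    (hs0 : 0 ≤ sVal p q δ) : aB r p q δ t ≤ 1 + sVal p q δ := by
  unfold aB sVal at *; nlinarith

private lemma aR_add_aB (r p q δ t : ℝ) : aR r p q δ t + aB r p q δ t = 1 + sVal p q δ := by
  unfold aR aB; ring

set_option maxHeartbeats 1000000 in
private lemma lin_lip (r p q δ c u v w t t' d d' : ℝ)
    (hr0 : 0 ≤ r) (hr1 : r ≤ 1) (hs0 : 0 ≤ sVal p q δ)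
    (hc0 : 0 < c) (hc1 : c ≤ 1)
    (hu0 : 0 ≤ u) (hu : c ≤ 1 - u) (hv0 : 0 ≤ v) (hv : c ≤ 1 - v)
    (hw0 : 0 ≤ w) (hw1 : w ≤ 1)
    (ht0 : 0 ≤ t) (ht1 : t ≤ 1) (ht0' : 0 ≤ t') (ht1' : t' ≤ 1)
    (hd : d = 1 + sVal p q δ - u * aB r p q δ t - v * aR r p q δ t)
    (hd' : d' = 1 + sVal p q δ - u * aB r p q δ t' - v * aR r p q δ t') :
    |w * aR r p q δ t / d - w * aR r p q δ t' / d'| ≤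
      2 / (c ^ 2 * (1 + sVal p q δ)) * |t - t'| := by
  have hS0 : (0:ℝ) < 1 + sVal p q δ := by linarith
  have hX0 := aR_nonneg r p q δ t hr0 ht0 hs0
  have hX0' := aR_nonneg r p q δ t' hr0 ht0' hs0
  have hX1' := aR_le r p q δ t' hr1 ht1' hs0
  have hB0 := aB_nonneg r p q δ t hr1 ht1 hs0
  have hB0' := aB_nonneg r p q δ t' hr1 ht1' hs0
  have hsum := aR_add_aB r p q δ t
  have hsum' := aR_add_aB r p q δ t'
  have hm : 0 < c * (1 + sVal p q δ) := by positivity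
  have hdm : c * (1 + sVal p q δ) ≤ d := by
    rw [hd]
    nlinarith [mul_nonneg (show (0:ℝ) ≤ 1 - u - c by linarith) hB0,
      mul_nonneg (show (0:ℝ) ≤ 1 - v - c by linarith) hX0]
  have hdm' : c * (1 + sVal p q δ) ≤ d' := by
    rw [hd']
    nlinarith [mul_nonneg (show (0:ℝ) ≤ 1 - u - c by linarith) hB0',
      mul_nonneg (show (0:ℝ) ≤ 1 - v - c by linarith) hX0']
  have hA : |w * aR r p q δ t - w * aR r p q δ t'| ≤ |t - t'| := by
    have h : w * aR r p q δ t - w * aR r p q δ t' = w * (t - t') := by unfold aR; ring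
    rw [h, abs_mul, abs_of_nonneg hw0]
    nlinarith [abs_nonneg (t - t')]
  have hNA : |w * aR r p q δ t'| ≤ 1 + sVal p q δ := by
    rw [abs_of_nonneg (mul_nonneg hw0 hX0')]
    nlinarith
  have hB : |d - d'| ≤ |t - t'| := by
    have h : d - d' = (u - v) * (t - t') := by rw [hd, hd']; unfold aB aR; ring
    have huv : |u - v| ≤ 1 := abs_le.2 ⟨by linarith, by linarith⟩
    rw [h, abs_mul]
    nlinarith [abs_nonneg (t - t')]
  have key := ratio_diff (w * aR r p q δ t) (w * aR r p q δ t') d d'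
    (c * (1 + sVal p q δ)) (|t - t'|) (1 + sVal p q δ) (|t - t'|) hm hdm hdm' hA hNA hB
  refine key.trans ?_
  have hc' : c ≠ 0 := ne_of_gt hc0
  have hS' : (1 + sVal p q δ) ≠ 0 := ne_of_gt hS0
  have h2 : (1 + sVal p q δ) * |t - t'| / (c * (1 + sVal p q δ)) ^ 2
      = |t - t'| / (c ^ 2 * (1 + sVal p q δ)) := by
    field_simp
  have h1 : |t - t'| / (c * (1 + sVal p q δ)) ≤ |t - t'| / (c ^ 2 * (1 + sVal p q δ)) := by
    rw [div_le_div_iff₀ (by positivity) (by positivity)]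
    have hle : c ^ 2 * (1 + sVal p q δ) ≤ c * (1 + sVal p q δ) := by
      nlinarith [mul_nonneg (mul_nonneg hc0.le hS0.le) (show (0:ℝ) ≤ 1 - c by linarith)]
    exact mul_le_mul_of_nonneg_left hle (abs_nonneg _)
  have h3 : 2 / (c ^ 2 * (1 + sVal p q δ)) * |t - t'|
      = |t - t'| / (c ^ 2 * (1 + sVal p q δ)) + |t - t'| / (c ^ 2 * (1 + sVal p q δ)) := by
    ring
  linarith [h2, h1, h3]

private lemma D3_eq (r p q b e δ x y : ℝ) :
    D3 r p q b e δ x y = e * (aR r p q δ x) * (aR r p q δ y)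
      + (1 - e) * (aR r p q δ x) * (aB r p q δ y)
      + (1 - b) * (aB r p q δ x) * (aR r p q δ y)
      + b * (aB r p q δ x) * (aB r p q δ y) := by
  unfold D3 aR aB; ring

private lemma D3_lb (r p q b e δ c x y : ℝ)
    (hr0 : 0 ≤ r) (hr1 : r ≤ 1) (hs0 : 0 ≤ sVal p q δ) (hc0 : 0 < c)
    (hce : c ≤ e) (hce' : c ≤ 1 - e) (hcb : c ≤ b) (hcb' : c ≤ 1 - b)
    (hx0 : 0 ≤ x) (hx1 : x ≤ 1) (hy0 : 0 ≤ y) (hy1 : y ≤ 1) :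
    c * (1 + sVal p q δ) ^ 2 ≤ D3 r p q b e δ x y := by
  rw [D3_eq]
  exact quad_lb c e b _ _ _ _ _ hce hce' hcb hcb'
    (aR_nonneg r p q δ x hr0 hx0 hs0) (aB_nonneg r p q δ x hr1 hx1 hs0)
    (aR_nonneg r p q δ y hr0 hy0 hs0) (aB_nonneg r p q δ y hr1 hy1 hs0)
    (aR_add_aB r p q δ x) (aR_add_aB r p q δ y)

private lemma D3_diff (r p q b e δ x y x' y' : ℝ)
    (hr0 : 0 ≤ r) (hr1 : r ≤ 1) (hs0 : 0 ≤ sVal p q δ)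
    (hb0 : 0 ≤ b) (hb1 : b ≤ 1) (he0 : 0 ≤ e) (he1 : e ≤ 1)
    (hx0 : 0 ≤ x) (hx1 : x ≤ 1) (hy0 : 0 ≤ y) (hy1 : y ≤ 1)
    (hx0' : 0 ≤ x') (hx1' : x' ≤ 1) (hy0' : 0 ≤ y') (hy1' : y' ≤ 1) :
    |D3 r p q b e δ x y - D3 r p q b e δ x' y'|
      ≤ 2 * (1 + sVal p q δ) * (|x - x'| + |y - y'|) := by
  set S := 1 + sVal p q δ with hSdef
  have hdRx : |aR r p q δ x - aR r p q δ x'| ≤ |x - x'| := by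
    have h : aR r p q δ x - aR r p q δ x' = x - x' := by unfold aR; ring
    rw [h]
  have hdRy : |aR r p q δ y - aR r p q δ y'| ≤ |y - y'| := by
    have h : aR r p q δ y - aR r p q δ y' = y - y' := by unfold aR; ring
    rw [h]
  have hdBx : |aB r p q δ x - aB r p q δ x'| ≤ |x - x'| := by
    have h : aB r p q δ x - aB r p q δ x' = -(x - x') := by unfold aB; ring
    rw [h, abs_neg]
  have hdBy : |aB r p q δ y - aB r p q δ y'| ≤ |y - y'| := by
    have h : aB r p q δ y - aB r p q δ y' = -(y - y') := by unfold aB; ring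
    rw [h, abs_neg]
  have haRx : |aR r p q δ x| ≤ S := by
    rw [abs_of_nonneg (aR_nonneg r p q δ x hr0 hx0 hs0)]
    exact aR_le r p q δ x hr1 hx1 hs0
  have haRx' : |aR r p q δ x'| ≤ S := by
    rw [abs_of_nonneg (aR_nonneg r p q δ x' hr0 hx0' hs0)]
    exact aR_le r p q δ x' hr1 hx1' hs0
  have haRy' : |aR r p q δ y'| ≤ S := by
    rw [abs_of_nonneg (aR_nonneg r p q δ y' hr0 hy0' hs0)]
    exact aR_le r p q δ y' hr1 hy1' hs0
  have haBx : |aB r p q δ x| ≤ S := by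
    rw [abs_of_nonneg (aB_nonneg r p q δ x hr1 hx1 hs0)]
    exact aB_le r p q δ x hr0 hx0 hs0
  have haBx' : |aB r p q δ x'| ≤ S := by
    rw [abs_of_nonneg (aB_nonneg r p q δ x' hr1 hx1' hs0)]
    exact aB_le r p q δ x' hr0 hx0' hs0
  have haBy' : |aB r p q δ y'| ≤ S := by
    rw [abs_of_nonneg (aB_nonneg r p q δ y' hr1 hy1' hs0)]
    exact aB_le r p q δ y' hr0 hy0' hs0
  have haRy : |aR r p q δ y| ≤ S := by
    rw [abs_of_nonneg (aR_nonneg r p q δ y hr0 hy0 hs0)]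
    exact aR_le r p q δ y hr1 hy1 hs0
  have haBy : |aB r p q δ y| ≤ S := by
    rw [abs_of_nonneg (aB_nonneg r p q δ y hr1 hy1 hs0)]
    exact aB_le r p q δ y hr0 hy0 hs0
  have p1 := prod_diff (aR r p q δ y) (aR r p q δ y') (aB r p q δ x) (aB r p q δ x')
    S (|y - y'|) (|x - x'|) haRy haBx' hdRy hdBx
  have p2 := prod_diff (aR r p q δ x) (aR r p q δ x') (aB r p q δ y) (aB r p q δ y')
    S (|x - x'|) (|y - y'|) haRx haBy' hdRx hdBy
  have p3 := prod_diff (aB r p q δ x) (aB r p q δ x') (aB r p q δ y) (aB r p q δ y')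
    S (|x - x'|) (|y - y'|) haBx haBy' hdBx hdBy
  have p4 := prod_diff (aR r p q δ x) (aR r p q δ x') (aR r p q δ y) (aR r p q δ y')
    S (|x - x'|) (|y - y'|) haRx haRy' hdRx hdRy
  have hsplit : D3 r p q b e δ x y - D3 r p q b e δ x' y'
      = -(b * (aR r p q δ y * aB r p q δ x - aR r p q δ y' * aB r p q δ x'))
        - e * (aR r p q δ x * aB r p q δ y - aR r p q δ x' * aB r p q δ y')
        - (1 - b) * (aB r p q δ x * aB r p q δ y - aB r p q δ x' * aB r p q δ y')
        - (1 - e) * (aR r p q δ x * aR r p q δ y - aR r p q δ x' * aR r p q δ y') := by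
    unfold D3; ring
  have hS0 : (0:ℝ) ≤ S := by rw [hSdef]; linarith
  have habs : |D3 r p q b e δ x y - D3 r p q b e δ x' y'|
      ≤ b * (S * (|y - y'| + |x - x'|)) + e * (S * (|x - x'| + |y - y'|))
        + (1 - b) * (S * (|x - x'| + |y - y'|)) + (1 - e) * (S * (|x - x'| + |y - y'|)) := by
    rw [hsplit]
    have t1 : |b * (aR r p q δ y * aB r p q δ x - aR r p q δ y' * aB r p q δ x')|
        ≤ b * (S * (|y - y'| + |x - x'|)) := by
      rw [abs_mul, abs_of_nonneg hb0]
      exact mul_le_mul_of_nonneg_left p1 hb0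
    have t2 : |e * (aR r p q δ x * aB r p q δ y - aR r p q δ x' * aB r p q δ y')|
        ≤ e * (S * (|x - x'| + |y - y'|)) := by
      rw [abs_mul, abs_of_nonneg he0]
      exact mul_le_mul_of_nonneg_left p2 he0
    have t3 : |(1 - b) * (aB r p q δ x * aB r p q δ y - aB r p q δ x' * aB r p q δ y')|
        ≤ (1 - b) * (S * (|x - x'| + |y - y'|)) := by
      rw [abs_mul, abs_of_nonneg (by linarith : (0:ℝ) ≤ 1 - b)]
      exact mul_le_mul_of_nonneg_left p3 (by linarith)
    have t4 : |(1 - e) * (aR r p q δ x * aR r p q δ y - aR r p q δ x' * aR r p q δ y')|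
        ≤ (1 - e) * (S * (|x - x'| + |y - y'|)) := by
      rw [abs_mul, abs_of_nonneg (by linarith : (0:ℝ) ≤ 1 - e)]
      exact mul_le_mul_of_nonneg_left p4 (by linarith)
    calc |(-(b * (aR r p q δ y * aB r p q δ x - aR r p q δ y' * aB r p q δ x')))
          - e * (aR r p q δ x * aB r p q δ y - aR r p q δ x' * aB r p q δ y')
          - (1 - b) * (aB r p q δ x * aB r p q δ y - aB r p q δ x' * aB r p q δ y')
          - (1 - e) * (aR r p q δ x * aR r p q δ y - aR r p q δ x' * aR r p q δ y')|
        ≤ |(-(b * (aR r p q δ y * aB r p q δ x - aR r p q δ y' * aB r p q δ x')))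
          - e * (aR r p q δ x * aB r p q δ y - aR r p q δ x' * aB r p q δ y')
          - (1 - b) * (aB r p q δ x * aB r p q δ y - aB r p q δ x' * aB r p q δ y')|
          + |(1 - e) * (aR r p q δ x * aR r p q δ y - aR r p q δ x' * aR r p q δ y')| :=
        abs_sub _ _
      _ ≤ |(-(b * (aR r p q δ y * aB r p q δ x - aR r p q δ y' * aB r p q δ x')))
          - e * (aR r p q δ x * aB r p q δ y - aR r p q δ x' * aB r p q δ y')|
          + |(1 - b) * (aB r p q δ x * aB r p q δ y - aB r p q δ x' * aB r p q δ y')|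
          + |(1 - e) * (aR r p q δ x * aR r p q δ y - aR r p q δ x' * aR r p q δ y')| := by
        have := abs_sub ((-(b * (aR r p q δ y * aB r p q δ x - aR r p q δ y' * aB r p q δ x')))
          - e * (aR r p q δ x * aB r p q δ y - aR r p q δ x' * aB r p q δ y'))
          ((1 - b) * (aB r p q δ x * aB r p q δ y - aB r p q δ x' * aB r p q δ y'))
        linarith
      _ ≤ |(-(b * (aR r p q δ y * aB r p q δ x - aR r p q δ y' * aB r p q δ x')))|
          + |e * (aR r p q δ x * aB r p q δ y - aR r p q δ x' * aB r p q δ y')|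
          + |(1 - b) * (aB r p q δ x * aB r p q δ y - aB r p q δ x' * aB r p q δ y')|
          + |(1 - e) * (aR r p q δ x * aR r p q δ y - aR r p q δ x' * aR r p q δ y')| := by
        have := abs_sub (-(b * (aR r p q δ y * aB r p q δ x - aR r p q δ y' * aB r p q δ x')))
          (e * (aR r p q δ x * aB r p q δ y - aR r p q δ x' * aB r p q δ y'))
        linarith
      _ ≤ b * (S * (|y - y'| + |x - x'|)) + e * (S * (|x - x'| + |y - y'|))
          + (1 - b) * (S * (|x - x'| + |y - y'|))
          + (1 - e) * (S * (|x - x'| + |y - y'|)) := by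
        rw [abs_neg]
        linarith [t1, t2, t3, t4]
  refine habs.trans ?_
  nlinarith [mul_nonneg hS0 (add_nonneg (abs_nonneg (x - x')) (abs_nonneg (y - y')))]

end Helpers
section Helpers2

set_option maxHeartbeats 1000000 in
private lemma p3_lip (r p q b e δ c x y x' y' N N' : ℝ)
    (hr0 : 0 ≤ r) (hr1 : r ≤ 1) (hs0 : 0 ≤ sVal p q δ) (hc0 : 0 < c) (hc1 : c ≤ 1)
    (hce : c ≤ e) (hce' : c ≤ 1 - e) (hcb : c ≤ b) (hcb' : c ≤ 1 - b)
    (hx0 : 0 ≤ x) (hx1 : x ≤ 1) (hy0 : 0 ≤ y) (hy1 : y ≤ 1)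
    (hx0' : 0 ≤ x') (hx1' : x' ≤ 1) (hy0' : 0 ≤ y') (hy1' : y' ≤ 1)
    (hN : |N - N'| ≤ (1 + sVal p q δ) * (|x - x'| + |y - y'|))
    (hN' : |N'| ≤ (1 + sVal p q δ) ^ 2) :
    |N / D3 r p q b e δ x y - N' / D3 r p q b e δ x' y'| ≤
      3 / (c ^ 2 * (1 + sVal p q δ)) * (|x - x'| + |y - y'|) := by
  have hS0 : (0:ℝ) < 1 + sVal p q δ := by linarith
  have hm : 0 < c * (1 + sVal p q δ) ^ 2 := by positivity
  have hdm := D3_lb r p q b e δ c x y hr0 hr1 hs0 hc0 hce hce' hcb hcb' hx0 hx1 hy0 hy1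
  have hdm' := D3_lb r p q b e δ c x' y' hr0 hr1 hs0 hc0 hce hce' hcb hcb' hx0' hx1' hy0' hy1'
  have hdd := D3_diff r p q b e δ x y x' y' hr0 hr1 hs0 (by linarith) (by linarith)
    (by linarith) (by linarith) hx0 hx1 hy0 hy1 hx0' hx1' hy0' hy1'
  have key := ratio_diff N N' (D3 r p q b e δ x y) (D3 r p q b e δ x' y')
    (c * (1 + sVal p q δ) ^ 2) ((1 + sVal p q δ) * (|x - x'| + |y - y'|))
    ((1 + sVal p q δ) ^ 2) (2 * (1 + sVal p q δ) * (|x - x'| + |y - y'|))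
    hm hdm hdm' hN hN' hdd
  refine key.trans ?_
  have hc' : c ≠ 0 := ne_of_gt hc0
  have hS' : (1 + sVal p q δ) ≠ 0 := ne_of_gt hS0
  set dd := |x - x'| + |y - y'| with hdd0
  have hdd1 : 0 ≤ dd := add_nonneg (abs_nonneg _) (abs_nonneg _)
  have e1 : (1 + sVal p q δ) * dd / (c * (1 + sVal p q δ) ^ 2) = dd / (c * (1 + sVal p q δ)) := by
    field_simp
  have e2 : (1 + sVal p q δ) ^ 2 * (2 * (1 + sVal p q δ) * dd) / (c * (1 + sVal p q δ) ^ 2) ^ 2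
      = 2 * dd / (c ^ 2 * (1 + sVal p q δ)) := by
    field_simp
  rw [e1, e2]
  have h1 : dd / (c * (1 + sVal p q δ)) ≤ dd / (c ^ 2 * (1 + sVal p q δ)) := by
    rw [div_le_div_iff₀ (by positivity) (by positivity)]
    have hle : c ^ 2 * (1 + sVal p q δ) ≤ c * (1 + sVal p q δ) := by
      nlinarith [mul_nonneg (mul_nonneg hc0.le hS0.le) (show (0:ℝ) ≤ 1 - c by linarith)]
    exact mul_le_mul_of_nonneg_left hle hdd1
  have h3 : 3 / (c ^ 2 * (1 + sVal p q δ)) * dd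
      = dd / (c ^ 2 * (1 + sVal p q δ)) + 2 * dd / (c ^ 2 * (1 + sVal p q δ)) := by
    ring
  linarith

end Helpers2
private lemma num_bound (w A B S : ℝ) (hw0 : 0 ≤ w) (hw1 : w ≤ 1)
    (hA0 : 0 ≤ A) (hA1 : A ≤ S) (hB0 : 0 ≤ B) (hB1 : B ≤ S) : |w * A * B| ≤ S ^ 2 := by
  have hS0 : 0 ≤ S := le_trans hA0 hA1
  rw [abs_of_nonneg (by positivity)]
  nlinarith [mul_le_mul hA1 hB1 hB0 hS0, mul_nonneg (mul_nonneg (sub_nonneg.2 hw1) hA0) hB0]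

private lemma num_diff (w A A' B B' S du dv : ℝ) (hw0 : 0 ≤ w) (hw1 : w ≤ 1)
    (hA : |A| ≤ S) (hB' : |B'| ≤ S) (hdA : |A - A'| ≤ du) (hdB : |B - B'| ≤ dv) :
    |w * A * B - w * A' * B'| ≤ S * (du + dv) := by
  have h := prod_diff A A' B B' S du dv hA hB' hdA hdB
  have h2 : w * A * B - w * A' * B' = w * (A * B - A' * B') := by ring
  rw [h2, abs_mul, abs_of_nonneg hw0]
  nlinarith [abs_nonneg (A * B - A' * B'),
    mul_le_mul_of_nonneg_right hw1 (abs_nonneg (A * B - A' * B'))]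

private lemma abs_aR_le (r p q δ t : ℝ) (hr0 : 0 ≤ r) (hr1 : r ≤ 1) (ht0 : 0 ≤ t)
    (ht1 : t ≤ 1) (hs0 : 0 ≤ sVal p q δ) : |aR r p q δ t| ≤ 1 + sVal p q δ := by
  rw [abs_of_nonneg (aR_nonneg r p q δ t hr0 ht0 hs0)]
  exact aR_le r p q δ t hr1 ht1 hs0

private lemma abs_aB_le (r p q δ t : ℝ) (hr0 : 0 ≤ r) (hr1 : r ≤ 1) (ht0 : 0 ≤ t)
    (ht1 : t ≤ 1) (hs0 : 0 ≤ sVal p q δ) : |aB r p q δ t| ≤ 1 + sVal p q δ := by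
  rw [abs_of_nonneg (aB_nonneg r p q δ t hr1 ht1 hs0)]
  exact aB_le r p q δ t hr0 ht0 hs0

private lemma abs_aR_diff (r p q δ t t' : ℝ) : |aR r p q δ t - aR r p q δ t'| ≤ |t - t'| := by
  have h : aR r p q δ t - aR r p q δ t' = t - t' := by unfold aR; ring
  rw [h]

private lemma abs_aB_diff (r p q δ t t' : ℝ) : |aB r p q δ t - aB r p q δ t'| ≤ |t - t'| := by
  have h : aB r p q δ t - aB r p q δ t' = -(t - t') := by unfold aB; ring
  rw [h, abs_neg]
private lemma sqrt_sq_add_sq_le (a b : ℝ) : Real.sqrt (a ^ 2 + b ^ 2) ≤ |a| + |b| := by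
  rw [show |a| + |b| = Real.sqrt ((|a| + |b|) ^ 2) from (Real.sqrt_sq (by positivity)).symm]
  apply Real.sqrt_le_sqrt
  nlinarith [sq_abs a, sq_abs b, mul_nonneg (abs_nonneg a) (abs_nonneg b)]

private lemma abs_le_sqrt_sum₁ (a b : ℝ) : |a| ≤ Real.sqrt (a ^ 2 + b ^ 2) :=
  Real.abs_le_sqrt (by nlinarith [sq_nonneg b])

private lemma abs_le_sqrt_sum₂ (a b : ℝ) : |b| ≤ Real.sqrt (a ^ 2 + b ^ 2) :=
  Real.abs_le_sqrt (by nlinarith [sq_nonneg a])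

set_option maxHeartbeats 2000000 in
/-- Key analytic step of Theorem 1 of the paper: for sufficiently large
preferential-attachment offset `δ`, the mean-field map `F` is a contraction on the
unit square (with respect to the Euclidean norm on `ℝ²`). -/
theorem F_contraction (r p q b e : ℝ)
    (hr0 : 0 ≤ r) (hr1 : r ≤ 1) (hb0 : 0 < b) (hb1 : b < 1) (he0 : 0 < e) (he1 : e < 1)
    (hp : 0 ≤ p) (hq : 0 ≤ q) (hpq0 : 0 < p + q) (hpq : p + q ≤ 1) :
    ∃ δs : ℝ, 0 < δs ∧ ∀ δ : ℝ, δs < δ →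
      ∃ L : ℝ, 0 ≤ L ∧ L < 1 ∧
        ∀ θ ∈ Set.Icc (0 : ℝ) 1 ×ˢ Set.Icc (0 : ℝ) 1,
        ∀ θ' ∈ Set.Icc (0 : ℝ) 1 ×ˢ Set.Icc (0 : ℝ) 1,
          Real.sqrt (((F r p q b e δ θ).1 - (F r p q b e δ θ').1) ^ 2
              + ((F r p q b e δ θ).2 - (F r p q b e δ θ').2) ^ 2) ≤
            L * Real.sqrt ((θ.1 - θ'.1) ^ 2 + (θ.2 - θ'.2) ^ 2) := by
  have hb1' : (0:ℝ) < 1 - b := by linarith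
  have he1' : (0:ℝ) < 1 - e := by linarith
  set c := min (min b (1 - b)) (min e (1 - e)) with hcdef
  have hc0 : 0 < c := lt_min (lt_min hb0 hb1') (lt_min he0 he1')
  have hcb : c ≤ b := le_trans (min_le_left _ _) (min_le_left _ _)
  have hcb' : c ≤ 1 - b := le_trans (min_le_left _ _) (min_le_right _ _)
  have hce : c ≤ e := le_trans (min_le_right _ _) (min_le_left _ _)
  have hce' : c ≤ 1 - e := le_trans (min_le_right _ _) (min_le_right _ _)
  have hc1 : c ≤ 1 := le_trans hcb (by linarith)
  refine ⟨40 / (c ^ 2 * (p + q)), by positivity, ?_⟩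
  intro δ hδ
  have hδ0 : 0 < δ := lt_trans (by positivity) hδ
  have hs0 : 0 ≤ sVal p q δ := by unfold sVal; positivity
  have hS0 : (0:ℝ) < 1 + sVal p q δ := by linarith
  have hsbig : 40 / c ^ 2 < sVal p q δ := by
    have h1 : (p + q) * (40 / (c ^ 2 * (p + q))) < (p + q) * δ :=
      mul_lt_mul_of_pos_left hδ hpq0
    have h2 : (p + q) * (40 / (c ^ 2 * (p + q))) = 40 / c ^ 2 := by
      field_simp
    unfold sVal
    linarith only [h1, h2]
  refine ⟨40 / (c ^ 2 * (1 + sVal p q δ)), by positivity, ?_, ?_⟩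
  · rw [div_lt_one (by positivity)]
    have h3 : c ^ 2 * (40 / c ^ 2) < c ^ 2 * sVal p q δ :=
      mul_lt_mul_of_pos_left hsbig (by positivity)
    have h4 : c ^ 2 * (40 / c ^ 2) = 40 := by field_simp
    nlinarith [h3, h4, sq_nonneg c, hs0]
  rintro ⟨x, y⟩ hθ ⟨x', y'⟩ hθ'
  simp only [Set.mem_prod, Set.mem_Icc] at hθ hθ'
  obtain ⟨⟨hx0, hx1⟩, hy0, hy1⟩ := hθ
  obtain ⟨⟨hx0', hx1'⟩, hy0', hy1'⟩ := hθ'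
  have hp1 : p ≤ 1 := by linarith
  have hq1 : q ≤ 1 := by linarith
  have hdd0 : 0 ≤ |x - x'| + |y - y'| := add_nonneg (abs_nonneg _) (abs_nonneg _)
  have hKpos : (0:ℝ) < c ^ 2 * (1 + sVal p q δ) := by positivity
  -- Lipschitz bounds for the four linear attachment probabilities
  have hP1RR : |P1RR r p q b e δ x - P1RR r p q b e δ x'| ≤
      2 / (c ^ 2 * (1 + sVal p q δ)) * |x - x'| := by
    unfold P1RR
    exact lin_lip r p q δ c b (1 - e) e x x' _ _ hr0 hr1 hs0 hc0 hc1 hb0.le hcb'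
      (by linarith) (by linarith) he0.le he1.le hx0 hx1 hx0' hx1' rfl rfl
  have hP1BR : |P1BR r p q b e δ x - P1BR r p q b e δ x'| ≤
      2 / (c ^ 2 * (1 + sVal p q δ)) * |x - x'| := by
    unfold P1BR
    exact lin_lip r p q δ c (1 - b) e (1 - e) x x' _ _ hr0 hr1 hs0 hc0 hc1
      (by linarith) (by linarith) he0.le (by linarith) (by linarith) (by linarith)
      hx0 hx1 hx0' hx1' (by ring) (by ring)
  have hP2RR : |P2RR r p q b e δ y - P2RR r p q b e δ y'| ≤
      2 / (c ^ 2 * (1 + sVal p q δ)) * |y - y'| := by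
    unfold P2RR
    exact lin_lip r p q δ c e (1 - e) e y y' _ _ hr0 hr1 hs0 hc0 hc1 he0.le hce'
      (by linarith) (by linarith) he0.le he1.le hy0 hy1 hy0' hy1' rfl rfl
  have hP2BR : |P2BR r p q b e δ y - P2BR r p q b e δ y'| ≤
      2 / (c ^ 2 * (1 + sVal p q δ)) * |y - y'| := by
    unfold P2BR
    exact lin_lip r p q δ c (1 - b) b (1 - b) y y' _ _ hr0 hr1 hs0 hc0 hc1
      (by linarith) (by linarith) hb0.le (by linarith) (by linarith) (by linarith)
      hy0 hy1 hy0' hy1' (by ring) (by ring)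
  -- ingredients for the P3 bounds
  have hRx := abs_aR_le r p q δ x hr0 hr1 hx0 hx1 hs0
  have hRx' := abs_aR_le r p q δ x' hr0 hr1 hx0' hx1' hs0
  have hRy := abs_aR_le r p q δ y hr0 hr1 hy0 hy1 hs0
  have hRy' := abs_aR_le r p q δ y' hr0 hr1 hy0' hy1' hs0
  have hBx := abs_aB_le r p q δ x hr0 hr1 hx0 hx1 hs0
  have hBx' := abs_aB_le r p q δ x' hr0 hr1 hx0' hx1' hs0
  have hBy := abs_aB_le r p q δ y hr0 hr1 hy0 hy1 hs0
  have hBy' := abs_aB_le r p q δ y' hr0 hr1 hy0' hy1' hs0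
  have hRx0' : 0 ≤ aR r p q δ x' := aR_nonneg r p q δ x' hr0 hx0' hs0
  have hRy0' : 0 ≤ aR r p q δ y' := aR_nonneg r p q δ y' hr0 hy0' hs0
  have hBx0' : 0 ≤ aB r p q δ x' := aB_nonneg r p q δ x' hr1 hx1' hs0
  have hBy0' : 0 ≤ aB r p q δ y' := aB_nonneg r p q δ y' hr1 hy1' hs0
  have hRleX' : aR r p q δ x' ≤ 1 + sVal p q δ := aR_le r p q δ x' hr1 hx1' hs0
  have hRleY' : aR r p q δ y' ≤ 1 + sVal p q δ := aR_le r p q δ y' hr1 hy1' hs0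
  have hBleX' : aB r p q δ x' ≤ 1 + sVal p q δ := aB_le r p q δ x' hr0 hx0' hs0
  have hBleY' : aB r p q δ y' ≤ 1 + sVal p q δ := aB_le r p q δ y' hr0 hy0' hs0
  -- P3RR
  have hP3RR : |P3RR r p q b e δ x y - P3RR r p q b e δ x' y'| ≤
      3 / (c ^ 2 * (1 + sVal p q δ)) * (|x - x'| + |y - y'|) := by
    unfold P3RR
    apply p3_lip r p q b e δ c x y x' y' _ _ hr0 hr1 hs0 hc0 hc1 hce hce' hcb hcb'
      hx0 hx1 hy0 hy1 hx0' hx1' hy0' hy1'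
    · have h := num_diff e (aR r p q δ y) (aR r p q δ y') (aR r p q δ x) (aR r p q δ x')
        (1 + sVal p q δ) (|y - y'|) (|x - x'|) he0.le he1.le hRy hRx'
        (abs_aR_diff r p q δ y y') (abs_aR_diff r p q δ x x')
      calc |e * aR r p q δ y * aR r p q δ x - e * aR r p q δ y' * aR r p q δ x'|
          ≤ (1 + sVal p q δ) * (|y - y'| + |x - x'|) := h
        _ = (1 + sVal p q δ) * (|x - x'| + |y - y'|) := by ring
    · exact num_bound e (aR r p q δ y') (aR r p q δ x') (1 + sVal p q δ)
        he0.le he1.le hRy0' hRleY' hRx0' hRleX'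
  -- P3BR
  have hP3BR : |P3BR r p q b e δ x y - P3BR r p q b e δ x' y'| ≤
      3 / (c ^ 2 * (1 + sVal p q δ)) * (|x - x'| + |y - y'|) := by
    unfold P3BR
    apply p3_lip r p q b e δ c x y x' y' _ _ hr0 hr1 hs0 hc0 hc1 hce hce' hcb hcb'
      hx0 hx1 hy0 hy1 hx0' hx1' hy0' hy1'
    · have h := num_diff (1 - e) (aB r p q δ y) (aB r p q δ y') (aR r p q δ x) (aR r p q δ x')
        (1 + sVal p q δ) (|y - y'|) (|x - x'|) (by linarith) (by linarith) hBy hRx'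
        (abs_aB_diff r p q δ y y') (abs_aR_diff r p q δ x x')
      calc |(1 - e) * aB r p q δ y * aR r p q δ x - (1 - e) * aB r p q δ y' * aR r p q δ x'|
          ≤ (1 + sVal p q δ) * (|y - y'| + |x - x'|) := h
        _ = (1 + sVal p q δ) * (|x - x'| + |y - y'|) := by ring
    · exact num_bound (1 - e) (aB r p q δ y') (aR r p q δ x') (1 + sVal p q δ)
        (by linarith) (by linarith) hBy0' hBleY' hRx0' hRleX'
  -- P3RB
  have hP3RB : |P3RB r p q b e δ x y - P3RB r p q b e δ x' y'| ≤
      3 / (c ^ 2 * (1 + sVal p q δ)) * (|x - x'| + |y - y'|) := by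
    unfold P3RB
    apply p3_lip r p q b e δ c x y x' y' _ _ hr0 hr1 hs0 hc0 hc1 hce hce' hcb hcb'
      hx0 hx1 hy0 hy1 hx0' hx1' hy0' hy1'
    · have h := num_diff (1 - b) (aR r p q δ y) (aR r p q δ y') (aB r p q δ x) (aB r p q δ x')
        (1 + sVal p q δ) (|y - y'|) (|x - x'|) (by linarith) (by linarith) hRy hBx'
        (abs_aR_diff r p q δ y y') (abs_aB_diff r p q δ x x')
      calc |(1 - b) * aR r p q δ y * aB r p q δ x - (1 - b) * aR r p q δ y' * aB r p q δ x'|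
          ≤ (1 + sVal p q δ) * (|y - y'| + |x - x'|) := h
        _ = (1 + sVal p q δ) * (|x - x'| + |y - y'|) := by ring
    · exact num_bound (1 - b) (aR r p q δ y') (aB r p q δ x') (1 + sVal p q δ)
        (by linarith) (by linarith) hRy0' hRleY' hBx0' hBleX'
  -- first component
  have hsplit1 : (F r p q b e δ (x, y)).1 - (F r p q b e δ (x', y')).1
      = p * r * (P1RR r p q b e δ x - P1RR r p q b e δ x')
        + p * (1 - r) * (P1BR r p q b e δ x - P1BR r p q b e δ x')
        + (1 - p - q) * (P3RR r p q b e δ x y - P3RR r p q b e δ x' y')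
        + (1 - p - q) * (P3BR r p q b e δ x y - P3BR r p q b e δ x' y') := by
    simp only [F]
    ring
  have hsplit2 : (F r p q b e δ (x, y)).2 - (F r p q b e δ (x', y')).2
      = q * r * (P2RR r p q b e δ y - P2RR r p q b e δ y')
        + q * (1 - r) * (P2BR r p q b e δ y - P2BR r p q b e δ y')
        + (1 - p - q) * (P3RR r p q b e δ x y - P3RR r p q b e δ x' y')
        + (1 - p - q) * (P3RB r p q b e δ x y - P3RB r p q b e δ x' y') := by
    simp only [F]
    ring
  have t11 := scale_bound (p * r) (P1RR r p q b e δ x - P1RR r p q b e δ x')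
    (2 / (c ^ 2 * (1 + sVal p q δ))) (|x - x'|) (|x - x'| + |y - y'|)
    (mul_nonneg hp hr0) (mul_le_one₀ hp1 hr0 hr1) hP1RR (by linarith [abs_nonneg (y - y')])
    (by positivity)
  have t12 := scale_bound (p * (1 - r)) (P1BR r p q b e δ x - P1BR r p q b e δ x')
    (2 / (c ^ 2 * (1 + sVal p q δ))) (|x - x'|) (|x - x'| + |y - y'|)
    (mul_nonneg hp (by linarith)) (mul_le_one₀ hp1 (by linarith) (by linarith)) hP1BR (by linarith [abs_nonneg (y - y')])
    (by positivity)
  have t13 := scale_bound (1 - p - q) (P3RR r p q b e δ x y - P3RR r p q b e δ x' y')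
    (3 / (c ^ 2 * (1 + sVal p q δ))) (|x - x'| + |y - y'|) (|x - x'| + |y - y'|)
    (by linarith) (by linarith) hP3RR le_rfl (by positivity)
  have t14 := scale_bound (1 - p - q) (P3BR r p q b e δ x y - P3BR r p q b e δ x' y')
    (3 / (c ^ 2 * (1 + sVal p q δ))) (|x - x'| + |y - y'|) (|x - x'| + |y - y'|)
    (by linarith) (by linarith) hP3BR le_rfl (by positivity)
  have t21 := scale_bound (q * r) (P2RR r p q b e δ y - P2RR r p q b e δ y')
    (2 / (c ^ 2 * (1 + sVal p q δ))) (|y - y'|) (|x - x'| + |y - y'|)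
    (mul_nonneg hq hr0) (mul_le_one₀ hq1 hr0 hr1) hP2RR (by linarith [abs_nonneg (x - x')])
    (by positivity)
  have t22 := scale_bound (q * (1 - r)) (P2BR r p q b e δ y - P2BR r p q b e δ y')
    (2 / (c ^ 2 * (1 + sVal p q δ))) (|y - y'|) (|x - x'| + |y - y'|)
    (mul_nonneg hq (by linarith)) (mul_le_one₀ hq1 (by linarith) (by linarith)) hP2BR (by linarith [abs_nonneg (x - x')])
    (by positivity)
  have t24 := scale_bound (1 - p - q) (P3RB r p q b e δ x y - P3RB r p q b e δ x' y')
    (3 / (c ^ 2 * (1 + sVal p q δ))) (|x - x'| + |y - y'|) (|x - x'| + |y - y'|)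
    (by linarith) (by linarith) hP3RB le_rfl (by positivity)
  have hF1 : |(F r p q b e δ (x, y)).1 - (F r p q b e δ (x', y')).1|
      ≤ 10 / (c ^ 2 * (1 + sVal p q δ)) * (|x - x'| + |y - y'|) := by
    rw [hsplit1]
    have a1 := abs_add_le
      (p * r * (P1RR r p q b e δ x - P1RR r p q b e δ x')
        + p * (1 - r) * (P1BR r p q b e δ x - P1BR r p q b e δ x')
        + (1 - p - q) * (P3RR r p q b e δ x y - P3RR r p q b e δ x' y'))
      ((1 - p - q) * (P3BR r p q b e δ x y - P3BR r p q b e δ x' y'))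
    have a2 := abs_add_le
      (p * r * (P1RR r p q b e δ x - P1RR r p q b e δ x')
        + p * (1 - r) * (P1BR r p q b e δ x - P1BR r p q b e δ x'))
      ((1 - p - q) * (P3RR r p q b e δ x y - P3RR r p q b e δ x' y'))
    have a3 := abs_add_le
      (p * r * (P1RR r p q b e δ x - P1RR r p q b e δ x'))
      (p * (1 - r) * (P1BR r p q b e δ x - P1BR r p q b e δ x'))
    have hcomb : (2:ℝ) / (c ^ 2 * (1 + sVal p q δ)) * (|x - x'| + |y - y'|)
        + 2 / (c ^ 2 * (1 + sVal p q δ)) * (|x - x'| + |y - y'|)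
        + 3 / (c ^ 2 * (1 + sVal p q δ)) * (|x - x'| + |y - y'|)
        + 3 / (c ^ 2 * (1 + sVal p q δ)) * (|x - x'| + |y - y'|)
        = 10 / (c ^ 2 * (1 + sVal p q δ)) * (|x - x'| + |y - y'|) := by ring
    linarith only [t11, t12, t13, t14, a1, a2, a3, hcomb]
  have hF2 : |(F r p q b e δ (x, y)).2 - (F r p q b e δ (x', y')).2|
      ≤ 10 / (c ^ 2 * (1 + sVal p q δ)) * (|x - x'| + |y - y'|) := by
    rw [hsplit2]
    have a1 := abs_add_le
      (q * r * (P2RR r p q b e δ y - P2RR r p q b e δ y')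
        + q * (1 - r) * (P2BR r p q b e δ y - P2BR r p q b e δ y')
        + (1 - p - q) * (P3RR r p q b e δ x y - P3RR r p q b e δ x' y'))
      ((1 - p - q) * (P3RB r p q b e δ x y - P3RB r p q b e δ x' y'))
    have a2 := abs_add_le
      (q * r * (P2RR r p q b e δ y - P2RR r p q b e δ y')
        + q * (1 - r) * (P2BR r p q b e δ y - P2BR r p q b e δ y'))
      ((1 - p - q) * (P3RR r p q b e δ x y - P3RR r p q b e δ x' y'))
    have a3 := abs_add_le
      (q * r * (P2RR r p q b e δ y - P2RR r p q b e δ y'))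
      (q * (1 - r) * (P2BR r p q b e δ y - P2BR r p q b e δ y'))
    have hcomb : (2:ℝ) / (c ^ 2 * (1 + sVal p q δ)) * (|x - x'| + |y - y'|)
        + 2 / (c ^ 2 * (1 + sVal p q δ)) * (|x - x'| + |y - y'|)
        + 3 / (c ^ 2 * (1 + sVal p q δ)) * (|x - x'| + |y - y'|)
        + 3 / (c ^ 2 * (1 + sVal p q δ)) * (|x - x'| + |y - y'|)
        = 10 / (c ^ 2 * (1 + sVal p q δ)) * (|x - x'| + |y - y'|) := by ring
    linarith only [t21, t22, t13, t24, a1, a2, a3, hcomb]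
  -- combine into the Euclidean estimate
  have hsq1 : Real.sqrt (((F r p q b e δ (x, y)).1 - (F r p q b e δ (x', y')).1) ^ 2
      + ((F r p q b e δ (x, y)).2 - (F r p q b e δ (x', y')).2) ^ 2)
      ≤ |(F r p q b e δ (x, y)).1 - (F r p q b e δ (x', y')).1|
        + |(F r p q b e δ (x, y)).2 - (F r p q b e δ (x', y')).2| :=
    sqrt_sq_add_sq_le _ _
  have hxd : |x - x'| ≤ Real.sqrt ((x - x') ^ 2 + (y - y') ^ 2) := abs_le_sqrt_sum₁ _ _
  have hyd : |y - y'| ≤ Real.sqrt ((x - x') ^ 2 + (y - y') ^ 2) := abs_le_sqrt_sum₂ _ _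
  have hfin : (|x - x'| + |y - y'|) ≤ 2 * Real.sqrt ((x - x') ^ 2 + (y - y') ^ 2) := by
    linarith only [hxd, hyd]
  have hmul : 20 / (c ^ 2 * (1 + sVal p q δ)) * (|x - x'| + |y - y'|)
      ≤ 20 / (c ^ 2 * (1 + sVal p q δ)) * (2 * Real.sqrt ((x - x') ^ 2 + (y - y') ^ 2)) :=
    mul_le_mul_of_nonneg_left hfin (by positivity)
  have hfinal : 20 / (c ^ 2 * (1 + sVal p q δ)) * (2 * Real.sqrt ((x - x') ^ 2 + (y - y') ^ 2))
      = 40 / (c ^ 2 * (1 + sVal p q δ)) * Real.sqrt ((x - x') ^ 2 + (y - y') ^ 2) := by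
    ring
  show Real.sqrt (((F r p q b e δ (x, y)).1 - (F r p q b e δ (x', y')).1) ^ 2
      + ((F r p q b e δ (x, y)).2 - (F r p q b e δ (x', y')).2) ^ 2)
      ≤ 40 / (c ^ 2 * (1 + sVal p q δ)) * Real.sqrt (((x, y).1 - (x', y').1) ^ 2
        + ((x, y).2 - (x', y').2) ^ 2)
  simp only
  calc Real.sqrt (((F r p q b e δ (x, y)).1 - (F r p q b e δ (x', y')).1) ^ 2
      + ((F r p q b e δ (x, y)).2 - (F r p q b e δ (x', y')).2) ^ 2)
      ≤ |(F r p q b e δ (x, y)).1 - (F r p q b e δ (x', y')).1|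
        + |(F r p q b e δ (x, y)).2 - (F r p q b e δ (x', y')).2| := hsq1
    _ ≤ 10 / (c ^ 2 * (1 + sVal p q δ)) * (|x - x'| + |y - y'|)
        + 10 / (c ^ 2 * (1 + sVal p q δ)) * (|x - x'| + |y - y'|) := add_le_add hF1 hF2
    _ = 20 / (c ^ 2 * (1 + sVal p q δ)) * (|x - x'| + |y - y'|) := by ring
    _ ≤ 20 / (c ^ 2 * (1 + sVal p q δ)) * (2 * Real.sqrt ((x - x') ^ 2 + (y - y') ^ 2)) := hmul
    _ = 40 / (c ^ 2 * (1 + sVal p q δ)) * Real.sqrt ((x - x') ^ 2 + (y - y') ^ 2) := hfinal
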